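/- Let F = f + g where f is L-smooth and g convex proper lsc, F* := inf F finite, and F satisfies the proximal-PL inequality 2μ(F(x) − F*) ≤ A_g(x, 1/L) for all x, where A_g(x, 1/L) := −2L·min_y {⟨∇f(x), y−x⟩ + (L/2)‖y−x‖² + g(y) − g(x)}. Then the exact proximal-gradient step x⁺ = prox_{(1/L)g}(x − (1/L)∇f(x)) satisfies F(x⁺) − F* ≤ (1 − μ/L)(F(x) − F*). -/

import Mathlib

open Real
open scoped RealInnerProductSpace

/-- Descent lemma: an `L`-Lipschitz gradient gives a quadratic upper bound. -/
lemma descent_lemma_aux {n : ℕ} (f : EuclideanSpace ℝ (Fin n) → ℝ) (L : ℝ) (hL : 0 < L)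
    (hdiff : ∀ x, DifferentiableAt ℝ f x)
    (hlip : ∀ x y, ‖gradient f x - gradient f y‖ ≤ L * ‖x - y‖)
    (x d : EuclideanSpace ℝ (Fin n)) :
    f (x + d) ≤ f x + ⟪gradient f x, d⟫ + L / 2 * ‖d‖ ^ 2 := by
  have hgrad : ∀ z v, (fderiv ℝ f z : EuclideanSpace ℝ (Fin n) → ℝ) v = ⟪gradient f z, v⟫ := by
    intro z v
    have h1 : InnerProductSpace.toDual ℝ (EuclideanSpace ℝ (Fin n)) (gradient f z)
        = fderiv ℝ f z := (InnerProductSpace.toDual ℝ _).apply_symm_apply _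
    rw [← h1]; simp [InnerProductSpace.toDual_apply_apply]
  set φ : ℝ → ℝ := fun t => f (x + t • d) - t * ⟪gradient f x, d⟫ - L / 2 * t ^ 2 * ‖d‖ ^ 2
    with hφ
  have hderiv : ∀ t : ℝ, HasDerivAt φ
      (⟪gradient f (x + t • d), d⟫ - ⟪gradient f x, d⟫ - L * t * ‖d‖ ^ 2) t := by
    intro t
    have hline : HasDerivAt (fun t : ℝ => x + t • d) d t := by
      simpa using (hasDerivAt_id t).smul_const d |>.const_add x
    have h1 : HasDerivAt (fun t : ℝ => f (x + t • d))
        ((fderiv ℝ f (x + t • d) : _ → ℝ) d) t :=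
      (hdiff (x + t • d)).hasFDerivAt.comp_hasDerivAt t hline
    rw [hgrad] at h1
    have h2 : HasDerivAt (fun t : ℝ => t * ⟪gradient f x, d⟫) ⟪gradient f x, d⟫ t := by
      simpa using (hasDerivAt_id t).mul_const _
    have h3 : HasDerivAt (fun t : ℝ => L / 2 * t ^ 2 * ‖d‖ ^ 2) (L * t * ‖d‖ ^ 2) t := by
      have := ((hasDerivAt_pow 2 t).const_mul (L / 2)).mul_const (‖d‖ ^ 2)
      refine this.congr_deriv ?_
      norm_num only [Nat.cast_ofNat, pow_one]
      ring
    exact (h1.sub h2).sub h3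
  have hderiv_nonpos : ∀ t ∈ Set.Icc (0:ℝ) 1,
      ⟪gradient f (x + t • d), d⟫ - ⟪gradient f x, d⟫ - L * t * ‖d‖ ^ 2 ≤ 0 := by
    intro t ht
    have h1 : ⟪gradient f (x + t • d), d⟫ - ⟪gradient f x, d⟫
        = ⟪gradient f (x + t • d) - gradient f x, d⟫ := by
      rw [inner_sub_left]
    rw [h1]
    have h2 : ⟪gradient f (x + t • d) - gradient f x, d⟫
        ≤ ‖gradient f (x + t • d) - gradient f x‖ * ‖d‖ := real_inner_le_norm _ _
    have h3 : ‖gradient f (x + t • d) - gradient f x‖ ≤ L * (t * ‖d‖) := by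
      have := hlip (x + t • d) x
      simpa [norm_smul, abs_of_nonneg ht.1, mul_assoc] using this
    have h4 : ‖gradient f (x + t • d) - gradient f x‖ * ‖d‖ ≤ L * (t * ‖d‖) * ‖d‖ :=
      mul_le_mul_of_nonneg_right h3 (norm_nonneg d)
    nlinarith [norm_nonneg d]
  have hanti : AntitoneOn φ (Set.Icc (0:ℝ) 1) := by
    apply antitoneOn_of_deriv_nonpos (convex_Icc 0 1)
    · exact fun t _ => (hderiv t).continuousAt.continuousWithinAt
    · exact fun t _ => (hderiv t).differentiableAt.differentiableWithinAt
    · intro t ht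
      rw [(hderiv t).deriv]
      exact hderiv_nonpos t (Set.mem_Icc_of_Ioo (by simpa using ht))
  have key : φ 1 ≤ φ 0 := hanti (by norm_num) (by norm_num) zero_le_one
  simp only [hφ, one_smul, zero_smul, add_zero, one_pow, zero_pow, one_mul, zero_mul,
    mul_zero, sub_zero] at key
  linarith

/-- Linear decrease of the exact proximal-gradient step for a composite
function `F = f + g` satisfying the proximal-PL inequality. -/
theorem proximal_gradient_step_proxPL
    {n : ℕ} (f g : EuclideanSpace ℝ (Fin n) → ℝ) (L μ Fstar : ℝ)
    (hL : 0 < L) (hμ : 0 < μ) (hμL : μ ≤ L)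
    (hdiff : ∀ x, DifferentiableAt ℝ f x)
    (hlip : ∀ x y, ‖gradient f x - gradient f y‖ ≤ L * ‖x - y‖)
    (hgconv : ConvexOn ℝ Set.univ g)
    (hglsc : LowerSemicontinuous g)
    (hglb : IsGLB (Set.range (fun x => f x + g x)) Fstar)
    -- proximal-PL inequality: for every `x` and every minimizer `y` of the inner problem,
    -- `2μ(F(x) − F*) ≤ −2L · min_y {⟨∇f(x), y−x⟩ + (L/2)‖y−x‖² + g(y) − g(x)}`
    (hproxPL : ∀ x y : EuclideanSpace ℝ (Fin n),
      IsMinOn (fun z => ⟪gradient f x, z - x⟫ + L / 2 * ‖z - x‖ ^ 2 + g z - g x) Set.univ y →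
      2 * μ * ((f x + g x) - Fstar) ≤
        -2 * L * (⟪gradient f x, y - x⟫ + L / 2 * ‖y - x‖ ^ 2 + g y - g x))
    (x xplus : EuclideanSpace ℝ (Fin n))
    -- `xplus = prox_{(1/L) g}(x − (1/L)∇f(x))`
    (hxplus : IsMinOn (fun y => L / 2 * ‖y - (x - (1 / L) • gradient f x)‖ ^ 2 + g y)
      Set.univ xplus) :
    (f xplus + g xplus) - Fstar ≤ (1 - μ / L) * ((f x + g x) - Fstar) := by
  -- identity relating the prox objective and the model Q
  have hid : ∀ z : EuclideanSpace ℝ (Fin n),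
      L / 2 * ‖z - (x - (1 / L) • gradient f x)‖ ^ 2
        = L / 2 * ‖z - x‖ ^ 2 + ⟪gradient f x, z - x⟫ + 1 / (2 * L) * ‖gradient f x‖ ^ 2 := by
    intro z
    have h1 : z - (x - (1 / L) • gradient f x) = (z - x) + (1 / L) • gradient f x := by abel
    rw [h1, norm_add_sq_real, inner_smul_right, norm_smul, real_inner_comm]
    have hLne : L ≠ 0 := hL.ne'
    rw [Real.norm_eq_abs, abs_of_pos (by positivity : (0:ℝ) < 1 / L)]
    set s : ℝ := ⟪gradient f x, z - x⟫
    field_simp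
  -- xplus minimizes Q
  have hQmin : IsMinOn (fun z => ⟪gradient f x, z - x⟫ + L / 2 * ‖z - x‖ ^ 2 + g z - g x)
      Set.univ xplus := by
    intro y _
    have h := hxplus (Set.mem_univ y)
    simp only [Set.mem_setOf_eq] at h ⊢
    rw [hid xplus, hid y] at h
    linarith
  -- proximal-PL applied at xplus
  have hPL := hproxPL x xplus hQmin
  -- descent lemma at d = xplus - x
  have hdesc := descent_lemma_aux f L hL hdiff hlip x (xplus - x)
  rw [add_sub_cancel] at hdesc
  -- combine
  set Q : ℝ := ⟪gradient f x, xplus - x⟫ + L / 2 * ‖xplus - x‖ ^ 2 + g xplus - g x with hQ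
  have hF : (f xplus + g xplus) - Fstar ≤ ((f x + g x) - Fstar) + Q := by
    simp only [hQ]; linarith
  have hQle : Q ≤ -(μ / L) * ((f x + g x) - Fstar) := by
    have h2L : (0:ℝ) < 2 * L := by linarith
    have := (div_le_div_iff_of_pos_right h2L).mpr hPL
    calc Q = (-2 * L * Q) / (-(2 * L)) := by field_simp
    _ ≤ (2 * μ * ((f x + g x) - Fstar)) / (-(2 * L)) := by
        apply div_le_div_of_nonpos_of_le (by linarith) hPL
    _ = -(μ / L) * ((f x + g x) - Fstar) := by field_simp
  calc (f xplus + g xplus) - Fstar ≤ ((f x + g x) - Fstar) + (-(μ / L) * ((f x + g x) - Fstar)) :=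
        by linarith
  _ = (1 - μ / L) * ((f x + g x) - Fstar) := by ring
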